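/- Let g : ℝ³ → [0,∞) be measurable, let p ∈ (3/2, ∞] and q with 1/p + 1/q = 1. Then ∫_{ℝ³} g(v) dv ≤ C_q · ‖g‖_p^{q/(q+3)} · (∫_{ℝ³} √(1+|v|²) g(v) dv)^{3/(q+3)}, where C_q = (4π/3)^{1/(q+3)} · ((q+3)/3) · (3/q)^{q/(q+3)}, provided both norms on the right are finite. -/

import Mathlib

/-!
Split `∫ g` over the ball of radius `R` and its complement. On the ball, Hölder's inequality gives
`|B_R| ^ (1/q) ‖g‖_p = (4π/3) ^ (1/q) R ^ (3/q) ‖g‖_p`; outside it `1 ≤ √(1+|v|²) / R`, so the tail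
is at most `(∫ √(1+|v|²) g) / R`. Minimising `a R ^ s + b / R` over `R > 0` (with `s = 3/q`)
yields the constant `C_q`.
-/

open Real MeasureTheory ENNReal Filter Topology

lemma ENNReal.HolderConjugate.one_sub_inv_toReal (p q : ℝ≥0∞) [p.HolderConjugate q] :
    1 - p.toReal⁻¹ = q.toReal⁻¹ := by
  rw [← ENNReal.toReal_inv, ← ENNReal.toReal_inv, ← HolderConjugate.one_sub_inv p q,
    ENNReal.toReal_sub_of_le (HolderTriple.inv_le_inv p q 1 |>.trans_eq inv_one) one_ne_top,
    toReal_one]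

lemma integral_le_eLpNorm_one_toReal {α : Type*} [MeasurableSpace α] {μ : Measure α}
    {f : α → ℝ} (hf : AEStronglyMeasurable f μ) : ∫ x, f x ∂μ ≤ (eLpNorm f 1 μ).toReal := by
  rw [eLpNorm_one_eq_lintegral_enorm, ← integral_norm_eq_lintegral_enorm hf]
  exact (le_abs_self _).trans (norm_integral_le_integral_norm f)

lemma setIntegral_le_measure_rpow_mul_eLpNorm {α : Type*} [MeasurableSpace α] {μ : Measure α}
    {f : α → ℝ} {s : Set α} {p q : ℝ≥0∞} [p.HolderConjugate q]
    (hf : AEStronglyMeasurable f μ) (hs : μ s ≠ ∞) (hfp : eLpNorm f p μ ≠ ∞) :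
    ∫ x in s, f x ∂μ ≤ (μ s).toReal ^ q.toReal⁻¹ * (eLpNorm f p μ).toReal := by
  have hHolder : eLpNorm f 1 (μ.restrict s) ≤ eLpNorm f p μ * μ s ^ q.toReal⁻¹ := by
    calc eLpNorm f 1 (μ.restrict s)
        ≤ eLpNorm f p (μ.restrict s) *
            μ.restrict s Set.univ ^ (1 / (1 : ℝ≥0∞).toReal - 1 / p.toReal) :=
          eLpNorm_le_eLpNorm_mul_rpow_measure_univ (HolderConjugate.one_le p q) hf.restrict
      _ ≤ eLpNorm f p μ * μ s ^ q.toReal⁻¹ := by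
          rw [Measure.restrict_apply_univ, toReal_one, one_div, one_div, inv_one,
            HolderConjugate.one_sub_inv_toReal p q]
          gcongr ?_ * _
          exact eLpNorm_mono_measure f Measure.restrict_le_self
  calc ∫ x in s, f x ∂μ ≤ (eLpNorm f 1 (μ.restrict s)).toReal :=
        integral_le_eLpNorm_one_toReal hf.restrict
    _ ≤ (eLpNorm f p μ * μ s ^ q.toReal⁻¹).toReal :=
        toReal_mono (mul_ne_top hfp (rpow_ne_top_of_nonneg (by positivity) hs)) hHolder
    _ = _ := by rw [toReal_mul, ← toReal_rpow, mul_comm]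

lemma setIntegral_le_integral_mul_div {α : Type*} [MeasurableSpace α] {μ : Measure α}
    {f w : α → ℝ} {s : Set α} {R : ℝ} (hR : 0 < R) (hs : MeasurableSet s)
    (hf : ∀ x, 0 ≤ f x) (hw : ∀ x, 0 ≤ w x) (hRw : ∀ x ∈ s, R ≤ w x)
    (hwf : Integrable (fun x => w x * f x) μ) :
    ∫ x in s, f x ∂μ ≤ (∫ x, w x * f x ∂μ) / R := by
  have hwf_nonneg : 0 ≤ᵐ[μ] fun x => w x * f x := .of_forall fun x => mul_nonneg (hw x) (hf x)
  calc ∫ x in s, f x ∂μ ≤ ∫ x in s, w x * f x / R ∂μ := by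
        refine integral_mono_of_nonneg (.of_forall hf) (hwf.integrableOn.div_const R) ?_
        refine ae_restrict_of_forall_mem hs fun x hx => ?_
        rw [le_div_iff₀ hR, mul_comm]
        exact mul_le_mul_of_nonneg_right (hRw x hx) (hf x)
    _ = (∫ x in s, w x * f x ∂μ) / R := integral_div R _
    _ ≤ (∫ x, w x * f x ∂μ) / R := by
        gcongr ?_ / _
        exact setIntegral_le_integral hwf hwf_nonneg

lemma le_of_forall_le_mul_rpow_add_div {x a b s : ℝ} (ha : 0 ≤ a) (hb : 0 ≤ b) (hs : 0 < s)
    (h : ∀ R > 0, x ≤ a * R ^ s + b / R) :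
    x ≤ (1 + 1 / s) * (s * a) ^ (1 / (s + 1)) * b ^ (s / (s + 1)) := by
  have hs1 : 0 < s + 1 := by linarith
  rcases ha.eq_or_lt with rfl | ha
  · have hb_tendsto : Tendsto (fun R : ℝ => b / R) atTop (𝓝 0) :=
      tendsto_const_nhds.div_atTop tendsto_id
    rw [mul_zero, zero_rpow (by positivity), mul_zero, zero_mul]
    refine ge_of_tendsto hb_tendsto ((eventually_gt_atTop 0).mono fun R hR => ?_)
    simpa using h R hR
  rcases hb.eq_or_lt with rfl | hb
  · have ha_tendsto : Tendsto (fun R : ℝ => a * R ^ s) (𝓝[>] 0) (𝓝 0) := by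
      simpa [zero_rpow hs.ne'] using
        ((continuousAt_rpow_const 0 s (.inr hs.le)).tendsto.const_mul a).mono_left
          nhdsWithin_le_nhds
    rw [zero_rpow (by positivity), mul_zero]
    refine ge_of_tendsto ha_tendsto (eventually_mem_nhdsWithin.mono fun R hR => ?_)
    simpa using h R hR
  set R := (b / (s * a)) ^ (1 / (s + 1)) with hR_def
  have hR : 0 < R := by positivity
  -- the minimiser of `R ↦ a * R ^ s + b / R`, where `s * a * R ^ s = b / R`
  have hbalance : a * R ^ s = b / (s * R) := by
    have hRpow : R ^ s * R = b / (s * a) := by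
      rw [← rpow_add_one hR.ne', hR_def, ← rpow_mul (by positivity),
        one_div_mul_cancel hs1.ne', Real.rpow_one]
    rw [_root_.eq_div_iff (by positivity)]
    calc a * R ^ s * (s * R) = s * a * (R ^ s * R) := by ring
      _ = b := by rw [hRpow]; field_simp
  have hb_div : b / R = (s * a) ^ (1 / (s + 1)) * b ^ (s / (s + 1)) := by
    have hexp : s / (s + 1) = 1 - 1 / (s + 1) := by field_simp; ring
    rw [hR_def, div_rpow hb.le (by positivity), hexp, rpow_sub hb, Real.rpow_one]
    field_simp
  calc x ≤ a * R ^ s + b / R := h R hR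
    _ = (1 + 1 / s) * (b / R) := by rw [hbalance]; field_simp; ring
    _ = _ := by rw [hb_div, mul_assoc]

lemma integral_le_measure_closedBall_rpow_mul_eLpNorm_add_div {E : Type*} [NormedAddCommGroup E]
    [MeasurableSpace E] [OpensMeasurableSpace E] [ProperSpace E] {μ : Measure E}
    [IsFiniteMeasureOnCompacts μ] {g : E → ℝ} {p q : ℝ≥0∞} [p.HolderConjugate q]
    (hg : Integrable g μ) (hg_nonneg : ∀ v, 0 ≤ g v) (hLp : eLpNorm g p μ ≠ ∞)
    (hkin : Integrable (fun v => √(1 + ‖v‖ ^ 2) * g v) μ) {R : ℝ} (hR : 0 < R) :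
    ∫ v, g v ∂μ ≤ (μ (Metric.closedBall 0 R)).toReal ^ q.toReal⁻¹ * (eLpNorm g p μ).toReal +
      (∫ v, √(1 + ‖v‖ ^ 2) * g v ∂μ) / R := by
  rw [← integral_add_compl measurableSet_closedBall hg]
  gcongr
  · exact setIntegral_le_measure_rpow_mul_eLpNorm hg.aestronglyMeasurable
      measure_closedBall_lt_top.ne hLp
  · refine setIntegral_le_integral_mul_div hR measurableSet_closedBall.compl hg_nonneg
      (fun v => sqrt_nonneg _) (fun v hv => ?_) hkin
    have hRv : R < ‖v‖ := by simpa using hv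
    exact hRv.le.trans (le_sqrt_of_sq_le (by linarith))

lemma interpolation_constant_eq {c r N : ℝ} (K : ℝ) (hc : 0 ≤ c) (hr : 0 < r) (hN : 0 ≤ N) :
    (1 + 1 / (3 / r)) * (3 / r * (c ^ r⁻¹ * N)) ^ (1 / (3 / r + 1)) * K ^ (3 / r / (3 / r + 1)) =
      c ^ (1 / (r + 3)) * ((r + 3) / 3) * (3 / r) ^ (r / (r + 3)) * N ^ (r / (r + 3)) *
        K ^ (3 / (r + 3)) := by
  have hθ : 1 / (3 / r + 1) = r / (r + 3) := by field_simp; ring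
  have hσ : 3 / r / (3 / r + 1) = 3 / (r + 3) := by field_simp; ring
  have hc_exp : r⁻¹ * (r / (r + 3)) = 1 / (r + 3) := by field_simp
  rw [hθ, hσ, Real.mul_rpow (by positivity) (by positivity), Real.mul_rpow (by positivity) hN,
    ← rpow_mul hc, hc_exp]
  field_simp
  ring

theorem kinetic_interpolation_general (g : EuclideanSpace ℝ (Fin 3) → ℝ)
    (hg_nonneg : ∀ v, 0 ≤ g v)
    (p q : ℝ≥0∞) (hp : (3 / 2 : ℝ≥0∞) < p) (hpq : 1 / p + 1 / q = 1)
    (hLp : eLpNorm g p volume ≠ ∞)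
    (hkin : Integrable (fun v => Real.sqrt (1 + ‖v‖ ^ 2) * g v))
    (hg_int : Integrable g) :
    (∫ v, g v) ≤
      ((4 * π / 3) ^ (1 / (q.toReal + 3)) * ((q.toReal + 3) / 3) *
          (3 / q.toReal) ^ (q.toReal / (q.toReal + 3))) *
        (eLpNorm g p volume).toReal ^ (q.toReal / (q.toReal + 3)) *
        (∫ v, Real.sqrt (1 + ‖v‖ ^ 2) * g v) ^ (3 / (q.toReal + 3)) := by
  have : p.HolderConjugate q := holderConjugate_iff.mpr (by simpa using hpq)
  have hp1 : p ≠ 1 :=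
    (lt_trans (by rw [ENNReal.lt_div_iff_mul_lt (by simp) (by simp)]; norm_num) hp).ne'
  have hq : 0 < q.toReal :=
    toReal_pos (HolderConjugate.ne_zero q p) ((HolderConjugate.ne_top_iff_ne_one q p).mpr hp1)
  have hsplit : ∀ R > 0, ∫ v, g v ≤ ((4 * π / 3) ^ q.toReal⁻¹ * (eLpNorm g p volume).toReal) *
      R ^ (3 / q.toReal) + (∫ v, √(1 + ‖v‖ ^ 2) * g v) / R := by
    intro R hR
    refine (integral_le_measure_closedBall_rpow_mul_eLpNorm_add_div (q := q) hg_int hg_nonneg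
      hLp hkin hR).trans_eq ?_
    rw [EuclideanSpace.volume_closedBall_fin_three, toReal_mul, toReal_pow, toReal_ofReal hR.le,
      toReal_ofReal (by positivity), Real.mul_rpow (by positivity) (by positivity),
      ← Real.rpow_natCast, ← rpow_mul hR.le]
    ring_nf
  have hK : 0 ≤ ∫ v, √(1 + ‖v‖ ^ 2) * g v :=
    integral_nonneg fun v => mul_nonneg (sqrt_nonneg _) (hg_nonneg v)
  exact (le_of_forall_le_mul_rpow_add_div (by positivity) hK (by positivity) hsplit).trans_eq
    (interpolation_constant_eq _ (by positivity) hq toReal_nonneg)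

/-- Kinetic interpolation estimate: for measurable `g ≥ 0` on `ℝ³`, `p ∈ (3/2,∞]`,
`1/p + 1/q = 1`,
`∫ g ≤ C_q ‖g‖_p^{q/(q+3)} (∫ √(1+|v|²) g)^{3/(q+3)}`, with
`C_q = (4π/3)^{1/(q+3)} ((q+3)/3) (3/q)^{q/(q+3)}`. -/
theorem kinetic_interpolation (g : EuclideanSpace ℝ (Fin 3) → ℝ)
    (hg_meas : Measurable g) (hg_nonneg : ∀ v, 0 ≤ g v)
    (p q : ℝ≥0∞) (hp : (3 / 2 : ℝ≥0∞) < p) (hpq : 1 / p + 1 / q = 1)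
    (hLp : eLpNorm g p volume ≠ ∞)
    (hkin : Integrable (fun v => Real.sqrt (1 + ‖v‖ ^ 2) * g v))
    (hg_int : Integrable g) :
    (∫ v, g v) ≤
      ((4 * π / 3) ^ (1 / (q.toReal + 3)) * ((q.toReal + 3) / 3) *
          (3 / q.toReal) ^ (q.toReal / (q.toReal + 3))) *
        (eLpNorm g p volume).toReal ^ (q.toReal / (q.toReal + 3)) *
        (∫ v, Real.sqrt (1 + ‖v‖ ^ 2) * g v) ^ (3 / (q.toReal + 3)) :=
  kinetic_interpolation_general g hg_nonneg p q hp hpq hLp hkin hg_int
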